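/- arXiv:1904.09332 — 5 statements merged into one kernel-verified Lean document; each statement's English description precedes it below -/
import Mathlib

section
/- For every real number λ > 0 and every s ∈ (0,1), λ^{-s} = β₀(1-s) · ∫₀^∞ (λ + e^{-y/(1-s)})^{-1} e^{-y} dy + β₀(s) · ∫₀^∞ (e^{-y/s} λ + 1)^{-1} e^{-y} dy, where both integrals converge. -/
/-!
Kato's integral `∫₀^∞ t^{-s} (λ + t)⁻¹ dt = π / sin (π s) · λ^{-s}` reduces, by scaling
`t ↦ λ t` and the substitution `t = x / (1 - x)`, to the Beta integral
`B(1 - s, s) = Γ(1 - s) Γ(s)`.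
Substituting `t = eᵘ` turns it into an integral over `ℝ`; splitting at `u = 0` and rescaling
`u = -y / (1 - s)` on the left half and `u = y / s` on the right half produces the two weighted
integrals. Dividing by `π / sin (π s)` and using `sin (π (1 - s)) = sin (π s)` gives the
formula.
-/

open MeasureTheory Real Set

theorem integral_Ioo_rpow_mul_one_sub_rpow {a b : ℝ} (ha : 0 < a) (hb : 0 < b) :
    ∫ x in Ioo 0 1, x ^ (a - 1) * (1 - x) ^ (b - 1) = Gamma a * Gamma b / Gamma (a + b) := by
  have hB := Complex.betaIntegral_eq_Gamma_mul_div a b (by simpa) (by simpa)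
  rw [Complex.betaIntegral, intervalIntegral.integral_of_le zero_le_one,
    integral_Ioc_eq_integral_Ioo, ← Complex.ofReal_add, Complex.Gamma_ofReal,
    Complex.Gamma_ofReal, Complex.Gamma_ofReal] at hB
  apply Complex.ofReal_injective
  rw [← integral_complex_ofReal]
  push_cast
  rw [← hB]
  refine setIntegral_congr_fun measurableSet_Ioo fun x hx ↦ ?_
  rw [Complex.ofReal_cpow hx.1.le, Complex.ofReal_cpow (sub_nonneg.2 hx.2.le)]
  push_cast
  rfl

theorem image_div_one_sub_Ioo : (fun x : ℝ ↦ x / (1 - x)) '' Ioo 0 1 = Ioi 0 := by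
  refine Subset.antisymm ?_ fun t (ht : 0 < t) ↦ ⟨t / (1 + t), ⟨by positivity, ?_⟩, ?_⟩
  · rintro _ ⟨x, hx, rfl⟩
    exact div_pos hx.1 (sub_pos.2 hx.2)
  · rw [div_lt_one (by positivity)]; linarith
  · field_simp; ring

theorem integral_Ioi_rpow_neg_mul_one_add_inv {s : ℝ} (hs0 : 0 < s) (hs1 : s < 1) :
    ∫ t in Ioi 0, t ^ (-s) * (1 + t)⁻¹ = π / sin (π * s) := by
  have hderiv : ∀ x ∈ Ioo (0 : ℝ) 1,
      HasDerivWithinAt (fun x ↦ x / (1 - x)) ((1 - x) ^ 2)⁻¹ (Ioo 0 1) x := by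
    intro x hx
    have hx1 : 1 - x ≠ 0 := (sub_pos.2 hx.2).ne'
    refine (((hasDerivAt_id' x).div ((hasDerivAt_id' x).const_sub 1) hx1).congr_deriv
      ?_).hasDerivWithinAt
    field_simp
    ring
  have hinj : InjOn (fun x : ℝ ↦ x / (1 - x)) (Ioo 0 1) := by
    intro x hx y hy hxy
    have hx1 : 1 - x ≠ 0 := (sub_pos.2 hx.2).ne'
    have hy1 : 1 - y ≠ 0 := (sub_pos.2 hy.2).ne'
    field_simp at hxy
    linarith
  rw [← image_div_one_sub_Ioo,
    integral_image_eq_integral_abs_deriv_smul measurableSet_Ioo hderiv hinj]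
  have hbeta := integral_Ioo_rpow_mul_one_sub_rpow (sub_pos.2 hs1) hs0
  rw [sub_add_cancel, Gamma_one, div_one, mul_comm, Gamma_mul_Gamma_one_sub,
    sub_sub_cancel_left] at hbeta
  rw [← hbeta]
  refine setIntegral_congr_fun measurableSet_Ioo fun x ⟨hx0, hx1⟩ ↦ ?_
  have h1x : 0 < 1 - x := sub_pos.2 hx1
  rw [smul_eq_mul, abs_of_pos (by positivity), div_rpow hx0.le h1x.le, rpow_sub h1x, rpow_one,
    rpow_neg h1x.le]
  field_simp
  ring

theorem integral_Ioi_rpow_neg_mul_add_inv {lam s : ℝ} (hlam : 0 < lam) (hs0 : 0 < s)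
    (hs1 : s < 1) :
    ∫ t in Ioi 0, t ^ (-s) * (lam + t)⁻¹ = π / sin (π * s) * lam ^ (-s) := by
  have hscale : ∀ x ∈ Ioi (0 : ℝ), (lam * x) ^ (-s) * (lam + lam * x)⁻¹ =
      lam ^ (-s) * lam⁻¹ * (x ^ (-s) * (1 + x)⁻¹) := fun x (hx : 0 < x) ↦ by
    rw [mul_rpow hlam.le hx.le, ← mul_one_add]
    field_simp
  calc ∫ t in Ioi 0, t ^ (-s) * (lam + t)⁻¹
      = lam * ∫ x in Ioi 0, (lam * x) ^ (-s) * (lam + lam * x)⁻¹ := by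
        simpa using (integral_comp_mul_left_Ioi' (fun t ↦ t ^ (-s) * (lam + t)⁻¹) 0 hlam).symm
    _ = lam * ∫ x in Ioi 0, lam ^ (-s) * lam⁻¹ * (x ^ (-s) * (1 + x)⁻¹) := by
        rw [setIntegral_congr_fun measurableSet_Ioi hscale]
    _ = π / sin (π * s) * lam ^ (-s) := by
        rw [integral_const_mul, integral_Ioi_rpow_neg_mul_one_add_inv hs0 hs1]
        field_simp

section ExpSubstitution

variable {E : Type*} [NormedAddCommGroup E] [NormedSpace ℝ E]

theorem integral_exp_smul_comp_exp (g : ℝ → E) :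
    ∫ x, exp x • g (exp x) = ∫ y in Ioi 0, g y := by
  rw [← range_exp, ← image_univ, integral_image_eq_integral_abs_deriv_smul MeasurableSet.univ
    (fun x _ ↦ (hasDerivAt_exp x).hasDerivWithinAt) exp_injective.injOn, setIntegral_univ]
  simp_rw [abs_of_pos (exp_pos _)]

theorem integrable_exp_smul_comp_exp_iff (g : ℝ → E) :
    Integrable (fun x ↦ exp x • g (exp x)) ↔ IntegrableOn g (Ioi 0) := by
  rw [← range_exp, ← image_univ, integrableOn_image_iff_integrableOn_abs_deriv_smul
    MeasurableSet.univ (fun x _ ↦ (hasDerivAt_exp x).hasDerivWithinAt) exp_injective.injOn,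
    integrableOn_univ]
  simp_rw [abs_of_pos (exp_pos _)]

theorem integral_Ioi_eq_integral_exp_neg_add_integral_exp (g : ℝ → E)
    (hg : IntegrableOn g (Ioi 0)) {a b : ℝ} (ha : 0 < a) (hb : 0 < b) :
    ∫ t in Ioi 0, g t =
      a • (∫ y in Ioi 0, exp (-(a * y)) • g (exp (-(a * y)))) +
        b • ∫ y in Ioi 0, exp (b * y) • g (exp (b * y)) := by
  set K : ℝ → E := fun x ↦ exp x • g (exp x)
  have hK : Integrable K := (integrable_exp_smul_comp_exp_iff g).2 hg
  calc ∫ t in Ioi 0, g t = (∫ x in Iic 0, K x) + ∫ x in Ioi 0, K x := by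
        rw [intervalIntegral.integral_Iic_add_Ioi hK.integrableOn hK.integrableOn,
          integral_exp_smul_comp_exp]
    _ = (∫ x in Ioi 0, K (-x)) + ∫ x in Ioi 0, K x := by
        rw [integral_comp_neg_Ioi, neg_zero]
    _ = _ := by
        have hKa := integral_comp_mul_left_Ioi' (fun x ↦ K (-x)) 0 ha
        have hKb := integral_comp_mul_left_Ioi' K 0 hb
        rw [mul_zero] at hKa hKb
        rw [← hKa, ← hKb]

end ExpSubstitution

theorem integrableOn_Ioi_inv_mul_exp_neg {D : ℝ → ℝ} {c : ℝ} (hD : Continuous D)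
    (hc : 0 < c) (hcD : ∀ y, c ≤ D y) : IntegrableOn (fun y ↦ (D y)⁻¹ * exp (-y)) (Ioi 0) := by
  refine ((integrableOn_exp_neg_Ioi 0).const_mul c⁻¹).mono' ?_ (.of_forall fun y ↦ ?_)
  · exact ((hD.inv₀ fun y ↦ (hc.trans_le (hcD y)).ne').mul
      (continuous_exp.comp continuous_neg)).aestronglyMeasurable
  · have hDy := hc.trans_le (hcD y)
    rw [norm_of_nonneg (by positivity)]
    gcongr
    exact hcD y

theorem exp_mul_exp_rpow_neg (x s : ℝ) : exp x * exp x ^ (-s) = exp ((1 - s) * x) := by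
  rw [← exp_mul, ← exp_add]
  ring_nf

theorem sin_pi_mul_pos {s : ℝ} (hs0 : 0 < s) (hs1 : s < 1) : 0 < sin (π * s) :=
  sin_pos_of_pos_of_lt_pi (by positivity) (by nlinarith [pi_pos])

theorem integral_Ioi_rpow_neg_mul_add_inv_eq_add {lam s : ℝ} (hlam : 0 < lam) (hs0 : 0 < s)
    (hs1 : s < 1) :
    ∫ t in Ioi 0, t ^ (-s) * (lam + t)⁻¹ =
      (1 - s)⁻¹ * (∫ y in Ioi 0, (lam + exp (-y / (1 - s)))⁻¹ * exp (-y)) +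
        s⁻¹ * ∫ y in Ioi 0, (exp (-y / s) * lam + 1)⁻¹ * exp (-y) := by
  have h1s : 0 < 1 - s := sub_pos.2 hs1
  have hsin := sin_pi_mul_pos hs0 hs1
  have hg : IntegrableOn (fun t ↦ t ^ (-s) * (lam + t)⁻¹) (Ioi 0) :=
    Integrable.of_integral_ne_zero <| by
      rw [integral_Ioi_rpow_neg_mul_add_inv hlam hs0 hs1]
      positivity
  rw [integral_Ioi_eq_integral_exp_neg_add_integral_exp _ hg (inv_pos.2 h1s)
    (inv_pos.2 hs0), smul_eq_mul, smul_eq_mul]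
  congr 3 <;> ext y <;> rw [smul_eq_mul, ← mul_assoc, exp_mul_exp_rpow_neg]
  · rw [show (1 - s) * -((1 - s)⁻¹ * y) = -y by field_simp,
      show -((1 - s)⁻¹ * y) = -y / (1 - s) by ring, mul_comm]
  · rw [show (1 - s) * (s⁻¹ * y) = -y + s⁻¹ * y by field_simp; ring, exp_add,
      show -y / s = -(s⁻¹ * y) by ring, exp_neg]
    field_simp
    rw [mul_add, mul_left_comm, ← exp_add, add_neg_cancel, exp_zero]
    ring

/-- Scalar (per-eigenvalue) form of the partitioned Dunford–Taylor representation
(Lemma 3.1 of the paper): with `β₀(t) = sin(πt)/(πt)` and weight `W(y) = e^{-y}`,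
for `0 < λ` and `s ∈ (0,1)`,
`λ^{-s} = β₀(1-s) ∫₀^∞ (λ + e^{-y/(1-s)})⁻¹ e^{-y} dy
        + β₀(s) ∫₀^∞ (e^{-y/s} λ + 1)⁻¹ e^{-y} dy`,
and both integrals converge. -/
theorem partitioned_kato_scalar (lam : ℝ) (hlam : 0 < lam) (s : ℝ)
    (hs : s ∈ Set.Ioo (0:ℝ) 1) :
    MeasureTheory.IntegrableOn
      (fun y : ℝ => (lam + Real.exp (-y / (1 - s)))⁻¹ * Real.exp (-y)) (Set.Ioi 0) ∧
    MeasureTheory.IntegrableOn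
      (fun y : ℝ => (Real.exp (-y / s) * lam + 1)⁻¹ * Real.exp (-y)) (Set.Ioi 0) ∧
    lam ^ (-s) =
      (Real.sin (Real.pi * (1 - s)) / (Real.pi * (1 - s))) *
        (∫ y in Set.Ioi (0:ℝ), (lam + Real.exp (-y / (1 - s)))⁻¹ * Real.exp (-y)) +
      (Real.sin (Real.pi * s) / (Real.pi * s)) *
        (∫ y in Set.Ioi (0:ℝ), (Real.exp (-y / s) * lam + 1)⁻¹ * Real.exp (-y)) := by
  obtain ⟨hs0, hs1⟩ := hs
  refine ⟨integrableOn_Ioi_inv_mul_exp_neg (by fun_prop) hlam fun y ↦ ?_,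
    integrableOn_Ioi_inv_mul_exp_neg (by fun_prop) one_pos fun y ↦ ?_, ?_⟩
  · exact le_add_of_nonneg_right (exp_pos _).le
  · exact le_add_of_nonneg_left (by positivity)
  · have hsplit := integral_Ioi_rpow_neg_mul_add_inv_eq_add hlam hs0 hs1
    rw [integral_Ioi_rpow_neg_mul_add_inv hlam hs0 hs1] at hsplit
    have hsin := sin_pi_mul_pos hs0 hs1
    have h1s : 1 - s ≠ 0 := (sub_pos.2 hs1).ne'
    rw [show π * (1 - s) = π - π * s by ring, sin_pi_sub]
    field_simp at hsplit ⊢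
    linarith
end

section
/- Let S and M be symmetric positive definite real N×N matrices, let f ∈ ℝ^N, and let μ, ν ≥ 0 with μ + ν > 0. Then μS + νM is invertible, and the solution w of (μS + νM) w = f satisfies ‖w‖_M ≤ ‖f‖_{M^{-1}} / (μ λ_min(S, M) + ν), where λ_min(S, M) := inf over nonzero x ∈ ℝ^N of (xᵀ S x)/(xᵀ M x). -/
/-!
Testing `(μS + νM) w = f` against `w` gives
`(μ λ_min + ν) ‖w‖_M² ≤ μ wᵀSw + ν wᵀMw = wᵀf = ⟨w, M⁻¹f⟩_M ≤ ‖w‖_M ‖f‖_{M⁻¹}`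
by the definition of `λ_min` and Cauchy–Schwarz for the inner product `xᵀMy`; dividing by
`‖w‖_M` gives the bound. The division by `μ λ_min + ν` is legitimate because `λ_min > 0`
when `N > 0`: the Rayleigh quotient is homogeneous of degree zero, so its infimum is a minimum
over the compact unit sphere.
-/

open Matrix

/-- The smallest generalized eigenvalue of the pair `(S, M)`:
`λ_min(S, M) = inf_{x ≠ 0} (xᵀ S x)/(xᵀ M x)`. -/
noncomputable def lamMinGen {N : ℕ} (S M : Matrix (Fin N) (Fin N) ℝ) : ℝ :=
  sInf ((fun x : Fin N → ℝ => (x ⬝ᵥ S.mulVec x) / (x ⬝ᵥ M.mulVec x)) '' {x | x ≠ 0})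

/-- The `M`-norm `‖x‖_M = √(xᵀ M x)`. -/
noncomputable def normWeighted {N : ℕ} (M : Matrix (Fin N) (Fin N) ℝ) (x : Fin N → ℝ) : ℝ :=
  Real.sqrt (x ⬝ᵥ M.mulVec x)

theorem Matrix.PosSemidef.dotProduct_mulVec_sq_le {n : Type*} [Fintype n] [DecidableEq n]
    {M : Matrix n n ℝ} (hM : M.PosSemidef) (x y : n → ℝ) :
    (x ⬝ᵥ M *ᵥ y) ^ 2 ≤ (x ⬝ᵥ M *ᵥ x) * (y ⬝ᵥ M *ᵥ y) := by
  have hsymm : M.toBilin'.IsSymm := by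
    rw [isSymm_toBilin'_iff_isSymm, IsSymm, ← conjTranspose_eq_transpose_of_trivial]
    exact hM.isHermitian.eq
  simpa only [toBilin'_apply'] using
    M.toBilin'.apply_sq_le_of_symm
      (fun x => by simpa [toBilin'_apply'] using hM.dotProduct_mulVec_nonneg x)
      (LinearMap.BilinForm.isSymm_iff.mp hsymm) x y

theorem Matrix.posDef_smul_add_smul {n : Type*} [Fintype n] {S M : Matrix n n ℝ}
    (hS : S.PosDef) (hM : M.PosDef) {μ ν : ℝ} (hμ : 0 ≤ μ) (hν : 0 ≤ ν) (hμν : 0 < μ + ν) :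
    (μ • S + ν • M).PosDef := by
  rcases hμ.lt_or_eq with hμ | rfl
  · exact (hS.smul hμ).add_posSemidef (hM.posSemidef.smul hν)
  · simpa using hM.smul (show 0 < ν by simpa using hμν)

theorem Matrix.mulVec_nonsing_inv_mulVec {n R : Type*} [Fintype n] [DecidableEq n] [CommRing R]
    {A : Matrix n n R} (hA : IsUnit A) (v : n → R) : A *ᵥ (A⁻¹ *ᵥ v) = v := by
  rw [mulVec_mulVec, mul_nonsing_inv _ ((isUnit_iff_isUnit_det A).mp hA), one_mulVec]

section normWeighted

variable {N : ℕ} {M : Matrix (Fin N) (Fin N) ℝ}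

theorem normWeighted_sq (hM : M.PosSemidef) (x : Fin N → ℝ) :
    normWeighted M x ^ 2 = x ⬝ᵥ M *ᵥ x :=
  Real.sq_sqrt (by simpa using hM.dotProduct_mulVec_nonneg x)

theorem dotProduct_mulVec_le_normWeighted_mul (hM : M.PosSemidef) (x y : Fin N → ℝ) :
    x ⬝ᵥ M *ᵥ y ≤ normWeighted M x * normWeighted M y := by
  rw [normWeighted, normWeighted, ← Real.sqrt_mul (by simpa using hM.dotProduct_mulVec_nonneg x)]
  exact (le_abs_self _).trans (Real.abs_le_sqrt (hM.dotProduct_mulVec_sq_le x y))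

theorem normWeighted_inv_eq (hM : M.PosDef) (f : Fin N → ℝ) :
    normWeighted M⁻¹ f = normWeighted M (M⁻¹ *ᵥ f) := by
  rw [normWeighted, normWeighted, mulVec_nonsing_inv_mulVec hM.isUnit, dotProduct_comm]

theorem dotProduct_le_normWeighted_mul_normWeighted_inv (hM : M.PosDef) (x f : Fin N → ℝ) :
    x ⬝ᵥ f ≤ normWeighted M x * normWeighted M⁻¹ f := by
  have h := dotProduct_mulVec_le_normWeighted_mul hM.posSemidef x (M⁻¹ *ᵥ f)
  rwa [mulVec_nonsing_inv_mulVec hM.isUnit, ← normWeighted_inv_eq hM] at h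

end normWeighted

section lamMinGen

variable {N : ℕ} {S M : Matrix (Fin N) (Fin N) ℝ}

noncomputable def genRayleigh (S M : Matrix (Fin N) (Fin N) ℝ) (x : Fin N → ℝ) : ℝ :=
  (x ⬝ᵥ S *ᵥ x) / (x ⬝ᵥ M *ᵥ x)

theorem lamMinGen_eq_sInf_genRayleigh :
    lamMinGen S M = sInf (genRayleigh S M '' {x | x ≠ 0}) := rfl

theorem genRayleigh_smul (S M : Matrix (Fin N) (Fin N) ℝ) {t : ℝ} (ht : t ≠ 0) (x : Fin N → ℝ) :
    genRayleigh S M (t • x) = genRayleigh S M x := by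
  simp only [genRayleigh, mulVec_smul, smul_dotProduct, dotProduct_smul, smul_eq_mul,
    ← mul_assoc]
  exact mul_div_mul_left _ _ (mul_ne_zero ht ht)

theorem genRayleigh_nonneg (hS : S.PosSemidef) (hM : M.PosSemidef) (x : Fin N → ℝ) :
    0 ≤ genRayleigh S M x :=
  div_nonneg (by simpa using hS.dotProduct_mulVec_nonneg x)
    (by simpa using hM.dotProduct_mulVec_nonneg x)

theorem lamMinGen_nonneg (hS : S.PosSemidef) (hM : M.PosSemidef) : 0 ≤ lamMinGen S M :=
  Real.sInf_nonneg (by rintro _ ⟨x, -, rfl⟩; exact genRayleigh_nonneg hS hM x)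

theorem lamMinGen_mul_le (hS : S.PosSemidef) (hM : M.PosDef) (x : Fin N → ℝ) :
    lamMinGen S M * (x ⬝ᵥ M *ᵥ x) ≤ x ⬝ᵥ S *ᵥ x := by
  rcases eq_or_ne x 0 with rfl | hx
  · simp
  rw [← le_div_iff₀ (by simpa using hM.dotProduct_mulVec_pos hx)]
  exact csInf_le ⟨0, by rintro _ ⟨y, -, rfl⟩; exact genRayleigh_nonneg hS hM.posSemidef y⟩
    ⟨x, hx, rfl⟩

theorem continuousOn_genRayleigh (S : Matrix (Fin N) (Fin N) ℝ) (hM : M.PosDef) :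
    ContinuousOn (genRayleigh S M) {x | x ≠ 0} := by
  have hquad (A : Matrix (Fin N) (Fin N) ℝ) : Continuous fun x : Fin N → ℝ => x ⬝ᵥ A *ᵥ x :=
    continuous_id.dotProduct (continuous_const.matrix_mulVec continuous_id)
  exact (hquad S).continuousOn.div (hquad M).continuousOn
    fun x hx => (by simpa using hM.dotProduct_mulVec_pos hx : 0 < x ⬝ᵥ M *ᵥ x).ne'

theorem exists_lamMinGen_eq [Nonempty (Fin N)] (S : Matrix (Fin N) (Fin N) ℝ) (hM : M.PosDef) :
    ∃ x ≠ 0, lamMinGen S M = genRayleigh S M x := by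
  have hsphere : Metric.sphere (0 : Fin N → ℝ) 1 ⊆ {x | x ≠ 0} :=
    fun x hx h => by simp [h] at hx
  obtain ⟨x₀, hx₀, hmin⟩ := (isCompact_sphere (0 : Fin N → ℝ) 1).exists_isMinOn
    (NormedSpace.sphere_nonempty.mpr zero_le_one) ((continuousOn_genRayleigh S hM).mono hsphere)
  refine ⟨x₀, hsphere hx₀, ?_⟩
  rw [lamMinGen_eq_sInf_genRayleigh]
  refine IsLeast.csInf_eq ⟨⟨x₀, hsphere hx₀, rfl⟩, ?_⟩
  rintro _ ⟨x, hx, rfl⟩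
  -- `genRayleigh` is constant on rays, so its minimum on the unit sphere is its infimum.
  have hnorm : ‖x‖ ≠ 0 := norm_ne_zero_iff.mpr hx
  rw [← genRayleigh_smul S M (inv_ne_zero hnorm) x]
  exact hmin (by simp [norm_smul, hnorm])

theorem lamMinGen_pos [Nonempty (Fin N)] (hS : S.PosDef) (hM : M.PosDef) : 0 < lamMinGen S M := by
  obtain ⟨x, hx, hx_eq⟩ := exists_lamMinGen_eq S hM
  rw [hx_eq]
  exact div_pos (by simpa using hS.dotProduct_mulVec_pos hx)
    (by simpa using hM.dotProduct_mulVec_pos hx)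

end lamMinGen

/-- General resolvent stability estimate: for symmetric positive definite `S, M`,
`f ∈ ℝ^N`, and `μ, ν ≥ 0` with `μ + ν > 0`, the matrix `μS + νM` is invertible and
the solution `w` of `(μS + νM) w = f` satisfies
`‖w‖_M ≤ ‖f‖_{M⁻¹} / (μ λ_min(S,M) + ν)`. -/
theorem resolvent_stability {N : ℕ} (S M : Matrix (Fin N) (Fin N) ℝ)
    (hS : S.PosDef) (hM : M.PosDef) (f : Fin N → ℝ)
    (μ ν : ℝ) (hμ : 0 ≤ μ) (hν : 0 ≤ ν) (hμν : 0 < μ + ν) :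
    IsUnit (μ • S + ν • M) ∧
    ∀ w : Fin N → ℝ, (μ • S + ν • M).mulVec w = f →
      normWeighted M w ≤ normWeighted M⁻¹ f / (μ * lamMinGen S M + ν) := by
  refine ⟨(posDef_smul_add_smul hS hM hμ hν hμν).isUnit, fun w hw => ?_⟩
  rcases eq_or_ne w 0 with rfl | hw0
  · have hlam := lamMinGen_nonneg hS.posSemidef hM.posSemidef
    simpa [normWeighted] using div_nonneg (Real.sqrt_nonneg _) (by positivity)
  obtain ⟨i, -⟩ := Function.ne_iff.mp hw0
  have : Nonempty (Fin N) := ⟨i⟩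
  have hκ : 0 < μ * lamMinGen S M + ν := by
    rcases hμ.lt_or_eq with hμ | rfl
    · exact add_pos_of_pos_of_nonneg (mul_pos hμ (lamMinGen_pos hS hM)) hν
    · simpa using hμν
  have hcoercive : (μ * lamMinGen S M + ν) * normWeighted M w ^ 2 ≤ w ⬝ᵥ f := by
    rw [← hw, normWeighted_sq hM.posSemidef]
    simp only [add_mulVec, smul_mulVec, dotProduct_add, dotProduct_smul, smul_eq_mul]
    nlinarith [lamMinGen_mul_le hS.posSemidef hM w]
  have hcs := dotProduct_le_normWeighted_mul_normWeighted_inv hM w f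
  have hw_pos : 0 < normWeighted M w :=
    Real.sqrt_pos.mpr (by simpa using hM.dotProduct_mulVec_pos hw0)
  rw [le_div_iff₀ hκ]
  nlinarith
end

section
/- Let S and M be symmetric positive definite real N×N matrices, f ∈ ℝ^N and y ≥ 0. Let w be the solution of (S + e^{-y} M) w = f, let w̃ ∈ ℝ^N be arbitrary, and set r := f - (S + e^{-y} M) w̃. Then ‖w - w̃‖_M ≤ ‖r‖₂ / ( √(λ_min(M)) · ( e^{-y} + λ_min(S, M) ) ), where ‖r‖₂ is the Euclidean norm of r, λ_min(M) is the smallest eigenvalue of M, and λ_min(S, M) := inf over nonzero x of (xᵀ S x)/(xᵀ M x). -/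
open Matrix

/-- The Euclidean norm `‖x‖₂ = √(xᵀ x)`. -/
noncomputable def normEuclid {N : ℕ} (x : Fin N → ℝ) : ℝ :=
  Real.sqrt (x ⬝ᵥ x)

/-!
The error `e = w - w̃` solves `(S + e^{-y} M) e = r`. Testing this equation with `e`
gives `(e^{-y} + λ_min(S, M)) ‖e‖_M² ≤ eᵀ r ≤ ‖e‖₂ ‖r‖₂`, and `‖e‖₂ ≤ ‖e‖_M / √λ_min(M)`;
dividing by `‖e‖_M` gives the bound.
-/

open scoped MatrixOrder in
theorem Matrix.PosDef.exists_pos_mul_dotProduct_self_le {n : Type*} [Fintype n] [DecidableEq n]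
    {M : Matrix n n ℝ} (hM : M.PosDef) : ∃ r > 0, ∀ x : n → ℝ, r * (x ⬝ᵥ x) ≤ x ⬝ᵥ M *ᵥ x := by
  cases isEmpty_or_nonempty n
  · exact ⟨1, one_pos, fun x => by simp [Subsingleton.elim x 0]⟩
  obtain ⟨r, hr, hrM⟩ := (CFC.exists_pos_algebraMap_le_iff hM.isHermitian).2
    fun _ hx => (isStrictlyPositive_iff_posDef.2 hM).spectrum_pos hx
  refine ⟨r, hr, fun x => ?_⟩
  have := (Matrix.le_iff.1 hrM).dotProduct_mulVec_nonneg x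
  rwa [Algebra.algebraMap_eq_smul_one, sub_mulVec, smul_mulVec, one_mulVec, star_trivial,
    dotProduct_sub, dotProduct_smul, smul_eq_mul, sub_nonneg] at this

theorem dotProduct_le_normEuclid_mul_normEuclid {N : ℕ} (x y : Fin N → ℝ) :
    x ⬝ᵥ y ≤ normEuclid x * normEuclid y := by
  simpa [normEuclid, dotProduct, sq] using Real.sum_mul_le_sqrt_mul_sqrt Finset.univ x y

theorem le_div_of_mul_sq_le_mul {k t ρ : ℝ} (ht : 0 ≤ t) (hk : 0 < k) (hρ : 0 ≤ ρ)
    (h : k * t ^ 2 ≤ t * ρ) : t ≤ ρ / k := by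
  rw [le_div_iff₀ hk]
  rcases ht.eq_or_lt with rfl | ht
  · simpa using hρ
  exact le_of_mul_le_mul_left (by linarith) ht

theorem dotProduct_mulVec_div_dotProduct_mulVec_nonneg {n : Type*} [Fintype n]
    {S M : Matrix n n ℝ} (hS : S.PosSemidef) (hM : M.PosSemidef) (x : n → ℝ) :
    0 ≤ (x ⬝ᵥ S *ᵥ x) / (x ⬝ᵥ M *ᵥ x) := by
  simpa using div_nonneg (hS.dotProduct_mulVec_nonneg x) (hM.dotProduct_mulVec_nonneg x)

section lamMinGen

variable {N : ℕ} {S M : Matrix (Fin N) (Fin N) ℝ}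

theorem le_lamMinGen [Nonempty (Fin N)] (hM : M.PosDef) {c : ℝ}
    (h : ∀ x, c * (x ⬝ᵥ M *ᵥ x) ≤ x ⬝ᵥ S *ᵥ x) : c ≤ lamMinGen S M := by
  obtain ⟨x₀, hx₀⟩ := exists_ne (0 : Fin N → ℝ)
  refine le_csInf ⟨_, x₀, hx₀, rfl⟩ ?_
  rintro _ ⟨x, hx, rfl⟩
  have hMx : 0 < x ⬝ᵥ M *ᵥ x := by simpa using hM.dotProduct_mulVec_pos hx
  exact (le_div_iff₀ hMx).2 (h x)

theorem lamMinGen_one_pos [Nonempty (Fin N)] (hM : M.PosDef) : 0 < lamMinGen M 1 := by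
  obtain ⟨r, hr, hrM⟩ := hM.exists_pos_mul_dotProduct_self_le
  exact hr.trans_le <| le_lamMinGen PosDef.one fun x => by simpa using hrM x

theorem sqrt_lamMinGen_one_mul_normEuclid_le (hM : M.PosDef) (x : Fin N → ℝ) :
    √(lamMinGen M 1) * normEuclid x ≤ normWeighted M x := by
  rw [normEuclid, normWeighted, ← Real.sqrt_mul (lamMinGen_nonneg hM.posSemidef PosSemidef.one)]
  simpa using Real.sqrt_le_sqrt (lamMinGen_mul_le hM.posSemidef PosDef.one x)

theorem add_lamMinGen_mul_normWeighted_sq_le (hS : S.PosSemidef) (hM : M.PosDef) (c : ℝ)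
    (x : Fin N → ℝ) :
    (c + lamMinGen S M) * normWeighted M x ^ 2 ≤ x ⬝ᵥ (S + c • M) *ᵥ x := by
  rw [normWeighted, Real.sq_sqrt (by simpa using hM.posSemidef.dotProduct_mulVec_nonneg x),
    add_mulVec, smul_mulVec, dotProduct_add, dotProduct_smul, smul_eq_mul]
  linarith [lamMinGen_mul_le hS hM x]

end lamMinGen

theorem rbm_error_indicator_minus_general {N : ℕ} (S M : Matrix (Fin N) (Fin N) ℝ)
    (hS : S.PosDef) (hM : M.PosDef) (f : Fin N → ℝ) (y : ℝ)
    (w wt : Fin N → ℝ) (hw : (S + Real.exp (-y) • M).mulVec w = f) :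
    normWeighted M (w - wt) ≤
      normEuclid (f - (S + Real.exp (-y) • M).mulVec wt) /
        (Real.sqrt (lamMinGen M 1) * (Real.exp (-y) + lamMinGen S M)) := by
  set A := S + Real.exp (-y) • M
  set e := w - wt
  set r := f - A *ᵥ wt
  have ha : 0 < Real.exp (-y) + lamMinGen S M :=
    add_pos_of_pos_of_nonneg (Real.exp_pos _) (lamMinGen_nonneg hS.posSemidef hM.posSemidef)
  have hr : 0 ≤ normEuclid r := Real.sqrt_nonneg _
  rcases isEmpty_or_nonempty (Fin N) with hN | hN
  · rw [Subsingleton.elim e 0, normWeighted, zero_dotProduct, Real.sqrt_zero]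
    exact div_nonneg hr (mul_nonneg (Real.sqrt_nonneg _) ha.le)
  have hb : 0 < √(lamMinGen M 1) := Real.sqrt_pos.2 (lamMinGen_one_pos hM)
  refine le_div_of_mul_sq_le_mul (Real.sqrt_nonneg _) (mul_pos hb ha) hr ?_
  calc √(lamMinGen M 1) * (Real.exp (-y) + lamMinGen S M) * normWeighted M e ^ 2
      ≤ √(lamMinGen M 1) * (e ⬝ᵥ A *ᵥ e) := by
        rw [mul_assoc]
        gcongr
        exact add_lamMinGen_mul_normWeighted_sq_le hS.posSemidef hM _ e
    _ = √(lamMinGen M 1) * (e ⬝ᵥ r) := by rw [mulVec_sub, hw]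
    _ ≤ √(lamMinGen M 1) * normEuclid e * normEuclid r := by
        rw [mul_assoc]
        gcongr
        exact dotProduct_le_normEuclid_mul_normEuclid e r
    _ ≤ normWeighted M e * normEuclid r := by
        gcongr
        exact sqrt_lamMinGen_one_mul_normEuclid_le hM e

/-- A posteriori error indicator `Δ_{n,-}(y)` (residual bound for the `-` problem):
if `(S + e^{-y} M) w = f` and `r = f - (S + e^{-y} M) w̃`, then
`‖w - w̃‖_M ≤ ‖r‖₂ / (√(λ_min(M)) (e^{-y} + λ_min(S,M)))`, where `λ_min(M)` is the
smallest eigenvalue of `M`, i.e. `λ_min(M, I)`. -/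
theorem rbm_error_indicator_minus {N : ℕ} (S M : Matrix (Fin N) (Fin N) ℝ)
    (hS : S.PosDef) (hM : M.PosDef) (f : Fin N → ℝ) (y : ℝ) (hy : 0 ≤ y)
    (w wt : Fin N → ℝ) (hw : (S + Real.exp (-y) • M).mulVec w = f) :
    normWeighted M (w - wt) ≤
      normEuclid (f - (S + Real.exp (-y) • M).mulVec wt) /
        (Real.sqrt (lamMinGen M 1) * (Real.exp (-y) + lamMinGen S M)) :=
  rbm_error_indicator_minus_general S M hS hM f y w wt hw
end

section
/- Let M be a symmetric positive definite real N×N matrix, and for σ ∈ {+, -} let w_σ, w̃_σ : [0,∞) → ℝ^N and Δ_σ : [0,∞) → ℝ satisfy ‖w_σ(y) - w̃_σ(y)‖_M ≤ Δ_σ(y) for all y ≥ 0, with D := max( sup_{y≥0} Δ_+(y), sup_{y≥0} Δ_-(y) ) finite. Let (y_{j,σ}, τ_{j,σ})_{j=1}^{M_σ} be quadrature rules with y_{j,σ} ≥ 0, τ_{j,σ} ≥ 0, and Σ_j τ_{j,σ} ≤ 1 for each σ. For s ∈ (0,1) put s₋ := 1-s, s₊ := s, β₀(t) := sin(πt)/(πt),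 and define u(s) := Σ_{σ∈{+,-}} β₀(s_σ) Σ_{j=1}^{M_σ} τ_{j,σ} w_σ(y_{j,σ}/s_σ) and u_N(s) := Σ_{σ∈{+,-}} β₀(s_σ) Σ_{j=1}^{M_σ} τ_{j,σ} w̃_σ(y_{j,σ}/s_σ). Then for every s ∈ (0,1): ‖u(s) - u_N(s)‖_M ≤ (4/π) · D. -/
open Matrix Real Set

/-- `β₀(t) = sin(πt)/(πt)`. -/
noncomputable def beta0 (t : ℝ) : ℝ := Real.sin (Real.pi * t) / (Real.pi * t)

/-!
The two quadrature sums of `u(s) - u_N(s)` are convex-type combinations (weights `τ ≥ 0` of total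
mass at most one) of errors `w_σ - w̃_σ` at nonnegative points, so each has `M`-norm at most `D`,
`‖·‖_M` being the norm of the inner product `⟨x, y⟩_M = yᵀ M x`. What remains is the scalar bound
`β₀(1 - s) + β₀(s) = sin(πs) / (π s (1 - s)) ≤ 4/π`, i.e. `sin(πt) ≤ 4t(1 - t)` on `[0, 1]`.
-/

/-- The fourth-order Taylor bound for `cos` is sharp enough here because `π² > 384/43`. -/
lemma cos_pi_mul_le_one_sub_four_mul_sq {u : ℝ} (hu : |π * u| ≤ 1) :
    cos (π * u) ≤ 1 - 4 * u ^ 2 := by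
  have htaylor : cos (π * u) ≤ 1 - (π * u) ^ 2 / 2 + ((π * u) ^ 2) ^ 2 * (5 / 96) := by
    have h := (abs_sub_le_iff.1 (cos_bound hu)).1
    rw [show |π * u| ^ 4 = (|π * u| ^ 2) ^ 2 by ring, sq_abs] at h
    linarith
  have hsq : (π * u) ^ 2 ≤ 1 := by nlinarith [sq_abs (π * u), abs_nonneg (π * u)]
  have hpi : (384 / 43 : ℝ) ≤ π ^ 2 := by nlinarith [pi_gt_three]
  nlinarith [sq_nonneg u, mul_le_mul_of_nonneg_left hsq (sq_nonneg (π * u)),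
    mul_le_mul_of_nonneg_right hpi (sq_nonneg u)]

lemma sin_pi_mul_le_four_mul_mul_one_sub_of_le_half {t : ℝ} (h0 : 0 ≤ t) (h1 : t ≤ 1 / 2) :
    sin (π * t) ≤ 4 * t * (1 - t) := by
  rcases le_or_gt t (1 - π / 4) with hsmall | hlarge
  · calc sin (π * t) ≤ π * t := sin_le (by positivity)
      _ ≤ 4 * t * (1 - t) := by nlinarith
  · have hu : |π * (1 / 2 - t)| ≤ 1 := by
      rw [abs_of_nonneg (mul_nonneg pi_pos.le (by linarith))]
      nlinarith [pi_lt_d2]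
    calc sin (π * t) = cos (π * (1 / 2 - t)) := by rw [← cos_pi_div_two_sub]; ring_nf
      _ ≤ 1 - 4 * (1 / 2 - t) ^ 2 := cos_pi_mul_le_one_sub_four_mul_sq hu
      _ = 4 * t * (1 - t) := by ring

lemma sin_pi_mul_le_four_mul_mul_one_sub {t : ℝ} (h0 : 0 ≤ t) (h1 : t ≤ 1) :
    sin (π * t) ≤ 4 * t * (1 - t) := by
  rcases le_total t (1 / 2) with hle | hge
  · exact sin_pi_mul_le_four_mul_mul_one_sub_of_le_half h0 hle
  · have h := sin_pi_mul_le_four_mul_mul_one_sub_of_le_half (t := 1 - t) (by linarith) (by linarith)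
    rw [mul_sub, mul_one, sin_pi_sub] at h
    linarith

lemma beta0_nonneg {t : ℝ} (h0 : 0 ≤ t) (h1 : t ≤ 1) : 0 ≤ beta0 t :=
  div_nonneg (sin_nonneg_of_nonneg_of_le_pi (by positivity) (by nlinarith [pi_pos]))
    (by positivity)

lemma beta0_one_sub_add_beta0_le {s : ℝ} (hs : s ∈ Ioo (0 : ℝ) 1) :
    beta0 (1 - s) + beta0 s ≤ 4 / π := by
  obtain ⟨hs0, hs1⟩ := hs
  have hs1' : 0 < 1 - s := by linarith
  have hsum : beta0 (1 - s) + beta0 s = sin (π * s) / (π * (s * (1 - s))) := by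
    rw [beta0, beta0, mul_sub, mul_one, sin_pi_sub]
    field_simp
    ring
  rw [hsum]
  calc sin (π * s) / (π * (s * (1 - s))) ≤ 4 * s * (1 - s) / (π * (s * (1 - s))) := by
        gcongr
        exact sin_pi_mul_le_four_mul_mul_one_sub hs0.le hs1.le
    _ = 4 / π := by field_simp

section Quadrature

variable {E : Type*} [SeminormedAddCommGroup E] [NormedSpace ℝ E]

lemma norm_sum_smul_sub_sum_smul_le {ι : Type*} [Fintype ι] {τ : ι → ℝ} {f g : ι → E} {D : ℝ}
    (hτ : ∀ j, 0 ≤ τ j) (hτsum : ∑ j, τ j ≤ 1) (hD : 0 ≤ D) (hfg : ∀ j, ‖f j - g j‖ ≤ D) :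
    ‖∑ j, τ j • f j - ∑ j, τ j • g j‖ ≤ D := by
  rw [← Finset.sum_sub_distrib]
  calc ‖∑ j, (τ j • f j - τ j • g j)‖ ≤ ∑ j, τ j * D := by
        refine norm_sum_le_of_le _ fun j _ => ?_
        rw [← smul_sub, norm_smul_of_nonneg (hτ j)]
        exact mul_le_mul_of_nonneg_left (hfg j) (hτ j)
    _ = (∑ j, τ j) * D := Finset.sum_mul _ _ _ |>.symm
    _ ≤ D := mul_le_of_le_one_left hD hτsum

lemma norm_smul_add_smul_sub_le {a b D : ℝ} {x x' y y' : E} (ha : 0 ≤ a) (hb : 0 ≤ b)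
    (hx : ‖x - x'‖ ≤ D) (hy : ‖y - y'‖ ≤ D) :
    ‖(a • x + b • y) - (a • x' + b • y')‖ ≤ (a + b) * D := by
  calc ‖(a • x + b • y) - (a • x' + b • y')‖ = ‖a • (x - x') + b • (y - y')‖ := by
        rw [smul_sub, smul_sub, add_sub_add_comm]
    _ ≤ a * ‖x - x'‖ + b * ‖y - y'‖ := by
        grw [norm_add_le, norm_smul_of_nonneg ha, norm_smul_of_nonneg hb]
    _ ≤ (a + b) * D := by rw [add_mul]; gcongr

end Quadrature

section MatrixNorm

variable {N : ℕ} {M : Matrix (Fin N) (Fin N) ℝ}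

lemma normWeighted_eq_norm (hM : M.PosDef) (x : Fin N → ℝ) :
    normWeighted M x = @norm _ (M.toNormedAddCommGroup hM).toNorm x := by
  change √(x ⬝ᵥ M *ᵥ x) = √(RCLike.re ((M *ᵥ x) ⬝ᵥ star x))
  rw [star_trivial, dotProduct_comm]
  rfl

lemma normWeighted_sum_smul_sub_sum_smul_le (hM : M.PosDef) {ι : Type*} [Fintype ι]
    {τ : ι → ℝ} {f g : ι → Fin N → ℝ} {D : ℝ} (hτ : ∀ j, 0 ≤ τ j) (hτsum : ∑ j, τ j ≤ 1)
    (hD : 0 ≤ D) (hfg : ∀ j, normWeighted M (f j - g j) ≤ D) :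
    normWeighted M (∑ j, τ j • f j - ∑ j, τ j • g j) ≤ D := by
  simp only [normWeighted_eq_norm hM] at hfg ⊢
  exact @norm_sum_smul_sub_sum_smul_le _ (M.toNormedAddCommGroup hM).toSeminormedAddCommGroup
    (M.toInnerProductSpace hM.posSemidef).toNormedSpace _ _ _ _ _ _ hτ hτsum hD hfg

lemma normWeighted_smul_add_smul_sub_le (hM : M.PosDef) {a b D : ℝ} {x x' y y' : Fin N → ℝ}
    (ha : 0 ≤ a) (hb : 0 ≤ b) (hx : normWeighted M (x - x') ≤ D)
    (hy : normWeighted M (y - y') ≤ D) :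
    normWeighted M ((a • x + b • y) - (a • x' + b • y')) ≤ (a + b) * D := by
  simp only [normWeighted_eq_norm hM] at hx hy ⊢
  exact @norm_smul_add_smul_sub_le _ (M.toNormedAddCommGroup hM).toSeminormedAddCommGroup
    (M.toInnerProductSpace hM.posSemidef).toNormedSpace _ _ _ _ _ _ _ ha hb hx hy

end MatrixNorm

/-- Theorem 4.2 (error certificate for the reduced-basis solution): if
`‖w_σ(y) - w̃_σ(y)‖_M ≤ Δ_σ(y)` for all `y ≥ 0` and
`D = max(sup_{y ≥ 0} Δ₊(y), sup_{y ≥ 0} Δ₋(y))` is finite, then with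
`u(s) = Σ_σ β₀(s_σ) Σ_j τ_{j,σ} w_σ(y_{j,σ}/s_σ)` and
`u_N(s) = Σ_σ β₀(s_σ) Σ_j τ_{j,σ} w̃_σ(y_{j,σ}/s_σ)` one has
`‖u(s) - u_N(s)‖_M ≤ (4/π) D` for every `s ∈ (0,1)`. -/
theorem rbm_certificate {N : ℕ} (M : Matrix (Fin N) (Fin N) ℝ) (hM : M.PosDef)
    (wm wp wtm wtp : ℝ → (Fin N → ℝ)) (Δm Δp : ℝ → ℝ)
    (hm : ∀ y : ℝ, 0 ≤ y → normWeighted M (wm y - wtm y) ≤ Δm y)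
    (hp : ∀ y : ℝ, 0 ≤ y → normWeighted M (wp y - wtp y) ≤ Δp y)
    (hbddm : BddAbove (Δm '' Set.Ici 0)) (hbddp : BddAbove (Δp '' Set.Ici 0))
    (D : ℝ) (hD : D = max (sSup (Δp '' Set.Ici 0)) (sSup (Δm '' Set.Ici 0)))
    (Mm Mp : ℕ) (ym : Fin Mm → ℝ) (τm : Fin Mm → ℝ) (yp : Fin Mp → ℝ) (τp : Fin Mp → ℝ)
    (hym : ∀ j, 0 ≤ ym j) (hyp : ∀ j, 0 ≤ yp j)
    (hτm : ∀ j, 0 ≤ τm j) (hτp : ∀ j, 0 ≤ τp j)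
    (hτmsum : ∑ j, τm j ≤ 1) (hτpsum : ∑ j, τp j ≤ 1)
    (s : ℝ) (hs : s ∈ Set.Ioo (0:ℝ) 1) :
    normWeighted M
        ((beta0 (1 - s) • ∑ j, τm j • wm (ym j / (1 - s)) +
            beta0 s • ∑ j, τp j • wp (yp j / s)) -
          (beta0 (1 - s) • ∑ j, τm j • wtm (ym j / (1 - s)) +
            beta0 s • ∑ j, τp j • wtp (yp j / s))) ≤
      (4 / Real.pi) * D := by
  obtain ⟨hs0, hs1⟩ := hs
  have hΔm (y : ℝ) (hy : 0 ≤ y) : normWeighted M (wm y - wtm y) ≤ D :=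
    hD ▸ (hm y hy).trans (le_max_of_le_right (le_csSup hbddm (mem_image_of_mem Δm hy)))
  have hΔp (y : ℝ) (hy : 0 ≤ y) : normWeighted M (wp y - wtp y) ≤ D :=
    hD ▸ (hp y hy).trans (le_max_of_le_left (le_csSup hbddp (mem_image_of_mem Δp hy)))
  have hD0 : 0 ≤ D := (sqrt_nonneg _).trans (hΔm 0 le_rfl)
  calc _ ≤ (beta0 (1 - s) + beta0 s) * D :=
        normWeighted_smul_add_smul_sub_le hM (beta0_nonneg (by linarith) (by linarith))
          (beta0_nonneg hs0.le hs1.le)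
          (normWeighted_sum_smul_sub_sum_smul_le hM hτm hτmsum hD0
            fun j => hΔm _ (div_nonneg (hym j) (by linarith)))
          (normWeighted_sum_smul_sub_sum_smul_le hM hτp hτpsum hD0
            fun j => hΔp _ (div_nonneg (hyp j) hs0.le))
    _ ≤ 4 / π * D := mul_le_mul_of_nonneg_right (beta0_one_sub_add_beta0_le ⟨hs0, hs1⟩) hD0
end

section
/- Let S and M be symmetric positive definite real N×N matrices, let f ∈ ℝ^N, and for y ≥ 0 set w₋(y) := (S + e^{-y} M)^{-1} f. Let s₋ ∈ (0,1), and let (y_j, τ_j)_{j=1}^{Q} be a quadrature rule with y_j ≥ 0 and τ_j ≥ 0. For a > 0 and b > 0 define g(a,b) := | ∫₀^∞ e^{-y}/(1 + a e^{-b y}) dy − Σ_{j=1}^{Q} τ_j/(1 + a e^{-b y_j}) |. Then ‖ ∫₀^∞ w₋(y/s₋) e^{-y} dy − Σ_{j=1}^{Q} τ_j w₋(y_j/s₋) ‖_M ≤ ‖f‖_{M^{-1}} · (1/λ_min(S,M)) · sup { g(a, 1/s₋) : a ∈ [1/λ_max(S,M), 1/λ_min(S,M)] }, where λ_min(S,M)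 and λ_max(S,M) are the smallest and largest generalized eigenvalues of (S,M), i.e. the infimum and supremum over nonzero x of (xᵀ S x)/(xᵀ M x). -/
open Matrix MeasureTheory Real Set

/-- The largest generalized eigenvalue of the pair `(S, M)`:
`λ_max(S, M) = sup_{x ≠ 0} (xᵀ S x)/(xᵀ M x)`. -/
noncomputable def lamMaxGen {N : ℕ} (S M : Matrix (Fin N) (Fin N) ℝ) : ℝ :=
  sSup ((fun x : Fin N → ℝ => (x ⬝ᵥ S.mulVec x) / (x ⬝ᵥ M.mulVec x)) '' {x | x ≠ 0})

/-- `w₋(y) = (S + e^{-y} M)⁻¹ f`. -/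
noncomputable def wMinus {N : ℕ} (S M : Matrix (Fin N) (Fin N) ℝ) (f : Fin N → ℝ)
    (y : ℝ) : Fin N → ℝ :=
  (S + Real.exp (-y) • M)⁻¹.mulVec f

/-- Scalar quadrature error `g(a,b)` for the rule `(y_j, τ_j)_{j=1}^Q`:
`g(a,b) = |∫₀^∞ e^{-y}/(1 + a e^{-by}) dy − Σ_j τ_j/(1 + a e^{-b y_j})|`. -/
noncomputable def gQuad (Q : ℕ) (y τ : Fin Q → ℝ) (a b : ℝ) : ℝ :=
  |(∫ t in Set.Ioi (0:ℝ), Real.exp (-t) / (1 + a * Real.exp (-b * t))) -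
    ∑ j, τ j / (1 + a * Real.exp (-b * y j))|

/-!
Simultaneously diagonalise the pair: writing `M = BᵀB` and diagonalising the symmetric matrix
`B⁻ᵀ S B⁻¹` orthogonally gives `C` with `CᵀMC = 1` and `CᵀSC = diag λ`, `λ > 0`. Then
`(S + e^{-y} M)⁻¹ = C diag((λᵢ + e^{-y})⁻¹) Cᵀ`, so with `v = Cᵀ f` the vector quadrature error is
`C (eᵢ vᵢ)ᵢ`, where `eᵢ` is the scalar quadrature error of `t ↦ e^{-t} (λᵢ + e^{-t/s₋})⁻¹`; scaling
out `λᵢ` shows `|eᵢ| = λᵢ⁻¹ g(λᵢ⁻¹, 1/s₋)`. As `C` is an isometry from the Euclidean norm onto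
`‖·‖_M` and `‖f‖_{M⁻¹} = |v|`, it remains to see that `λᵢ⁻¹` lies in the spectral interval: in the
coordinates `x = C z` the Rayleigh quotient is a weighted mean of the `λᵢ`, so
`λ_min(S,M) = minᵢ λᵢ` and `λ_max(S,M) = maxᵢ λᵢ`.
-/

open Finset

lemma Finset.sum_mul_div_sum_mem_Icc {ι : Type*} [Fintype ι] [Nonempty ι] (lam w : ι → ℝ)
    (hw : ∀ i, 0 ≤ w i) (hpos : 0 < ∑ i, w i) :
    (∑ i, lam i * w i) / ∑ i, w i ∈
      Set.Icc (univ.inf' univ_nonempty lam) (univ.sup' univ_nonempty lam) := by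
  rw [Set.mem_Icc, le_div_iff₀ hpos, div_le_iff₀ hpos, mul_sum, mul_sum]
  exact ⟨sum_le_sum fun i _ => mul_le_mul_of_nonneg_right (inf'_le _ (mem_univ i)) (hw i),
    sum_le_sum fun i _ => mul_le_mul_of_nonneg_right (le_sup' _ (mem_univ i)) (hw i)⟩

namespace Matrix

variable {n : Type*} [Fintype n]

lemma mulVec_dotProduct_mulVec_mulVec (C S : Matrix n n ℝ) (z : n → ℝ) :
    (C *ᵥ z) ⬝ᵥ S *ᵥ (C *ᵥ z) = z ⬝ᵥ (Cᵀ * S * C) *ᵥ z := by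
  rw [← mulVec_mulVec, ← mulVec_mulVec, dotProduct_mulVec z Cᵀ, vecMul_transpose]

variable [DecidableEq n]

open scoped MatrixOrder in
theorem PosDef.exists_transpose_mul_mul_eq_diagonal {S M : Matrix n n ℝ} (hM : M.PosDef)
    (hS : S.IsHermitian) :
    ∃ (C : Matrix n n ℝ) (lam : n → ℝ), Cᵀ * M * C = 1 ∧ Cᵀ * S * C = diagonal lam := by
  obtain ⟨B, rfl⟩ := CStarAlgebra.nonneg_iff_eq_star_mul_self.mp hM.posSemidef.nonneg
  have hB : IsUnit B.det := by
    have := hM.det_pos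
    rw [star_eq_conjTranspose, det_mul, det_conjTranspose] at this
    exact isUnit_iff_ne_zero.mpr fun h => by simp [h] at this
  have hA : ((B⁻¹)ᵀ * S * B⁻¹).IsHermitian := by
    simpa using isHermitian_conjTranspose_mul_mul B⁻¹ hS
  set U := hA.eigenvectorUnitary
  have hU : (U : Matrix n n ℝ)ᵀ * U = 1 := by
    simpa [star_eq_conjTranspose] using Unitary.coe_star_mul_self U
  have hD : (U : Matrix n n ℝ)ᵀ * ((B⁻¹)ᵀ * S * B⁻¹) * U = diagonal hA.eigenvalues := by
    simpa [star_eq_conjTranspose] using hA.conjStarAlgAut_star_eigenvectorUnitary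
  have hBB : (B⁻¹)ᵀ * (Bᵀ * B) * B⁻¹ = 1 := by
    rw [Matrix.mul_assoc, Matrix.mul_assoc, mul_nonsing_inv _ hB, Matrix.mul_one,
      ← transpose_mul, mul_nonsing_inv _ hB, transpose_one]
  rw [star_eq_conjTranspose, conjTranspose_eq_transpose_of_trivial]
  refine ⟨B⁻¹ * (U : Matrix n n ℝ), hA.eigenvalues, ?_, ?_⟩
  · calc (B⁻¹ * (U : Matrix n n ℝ))ᵀ * (Bᵀ * B) * (B⁻¹ * U)
        = (U : Matrix n n ℝ)ᵀ * ((B⁻¹)ᵀ * (Bᵀ * B) * B⁻¹) * U := by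
          simp only [transpose_mul, Matrix.mul_assoc]
      _ = 1 := by rw [hBB, Matrix.mul_one, hU]
  · simpa [Matrix.mul_assoc] using hD

variable {S M C : Matrix n n ℝ} {lam : n → ℝ}

lemma mul_transpose_mul_eq_one (hC : Cᵀ * M * C = 1) : C * (Cᵀ * M) = 1 :=
  mul_eq_one_comm.mp hC

lemma inv_eq_mul_transpose (hC : Cᵀ * M * C = 1) : M⁻¹ = C * Cᵀ :=
  inv_eq_left_inv (by rw [Matrix.mul_assoc, mul_transpose_mul_eq_one hC])

lemma dotProduct_inv_mulVec (hC : Cᵀ * M * C = 1) (f : n → ℝ) :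
    f ⬝ᵥ M⁻¹ *ᵥ f = (Cᵀ *ᵥ f) ⬝ᵥ (Cᵀ *ᵥ f) := by
  rw [inv_eq_mul_transpose hC, ← mulVec_mulVec, dotProduct_mulVec, ← mulVec_transpose]

lemma mulVec_ne_zero_of_transpose_mul_mul_eq_one (hC : Cᵀ * M * C = 1) {z : n → ℝ}
    (hz : z ≠ 0) : C *ᵥ z ≠ 0 := fun h => hz <| by
  simpa [mulVec_mulVec, hC] using congrArg ((Cᵀ * M) *ᵥ ·) h

lemma inv_add_smul_eq (hC : Cᵀ * M * C = 1) (hD : Cᵀ * S * C = diagonal lam) {c : ℝ}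
    (hc : ∀ i, lam i + c ≠ 0) :
    (S + c • M)⁻¹ = C * diagonal (fun i => (lam i + c)⁻¹) * Cᵀ := by
  have hK : Cᵀ * (S + c • M) * C = diagonal (fun i => lam i + c) := by
    rw [Matrix.mul_add, Matrix.add_mul, hD, Matrix.mul_smul, Matrix.smul_mul, hC,
      smul_one_eq_diagonal, diagonal_add]
  have hDD : diagonal (fun i => (lam i + c)⁻¹) * diagonal (fun i => lam i + c) = 1 := by
    rw [diagonal_mul_diagonal, ← diagonal_one]
    exact congrArg diagonal (funext fun i => inv_mul_cancel₀ (hc i))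
  refine inv_eq_left_inv ?_
  calc C * diagonal (fun i => (lam i + c)⁻¹) * Cᵀ * (S + c • M)
      = C * diagonal (fun i => (lam i + c)⁻¹) * Cᵀ * (S + c • M) * (C * (Cᵀ * M)) := by
        rw [mul_transpose_mul_eq_one hC, Matrix.mul_one]
    _ = C * (diagonal (fun i => (lam i + c)⁻¹) * (Cᵀ * (S + c • M) * C)) * (Cᵀ * M) := by
        simp only [Matrix.mul_assoc]
    _ = 1 := by rw [hK, hDD, Matrix.mul_one, mul_transpose_mul_eq_one hC]

lemma PosDef.pos_of_transpose_mul_mul_eq_diagonal (hS : S.PosDef) (hC : Cᵀ * M * C = 1)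
    (hD : Cᵀ * S * C = diagonal lam) (i : n) : 0 < lam i := by
  have h := hS.dotProduct_mulVec_pos
    (mulVec_ne_zero_of_transpose_mul_mul_eq_one hC (z := Pi.single i 1) (by simp))
  rw [star_trivial, mulVec_dotProduct_mulVec_mulVec, hD] at h
  simpa using h

noncomputable def genRayleigh (S M : Matrix n n ℝ) (x : n → ℝ) : ℝ :=
  (x ⬝ᵥ S *ᵥ x) / (x ⬝ᵥ M *ᵥ x)

lemma genRayleigh_mulVec (hC : Cᵀ * M * C = 1) (hD : Cᵀ * S * C = diagonal lam) (z : n → ℝ) :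
    genRayleigh S M (C *ᵥ z) = (∑ i, lam i * z i ^ 2) / ∑ i, z i ^ 2 := by
  rw [genRayleigh, mulVec_dotProduct_mulVec_mulVec, mulVec_dotProduct_mulVec_mulVec, hC, hD,
    one_mulVec]
  simp only [dotProduct, mulVec_diagonal]
  congr 1 <;> exact sum_congr rfl fun i _ => by ring

lemma genRayleigh_mulVec_single (hC : Cᵀ * M * C = 1) (hD : Cᵀ * S * C = diagonal lam)
    (i : n) : genRayleigh S M (C *ᵥ Pi.single i 1) = lam i := by
  rw [genRayleigh_mulVec hC hD]
  simp [Pi.single_apply]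

lemma genRayleigh_mem_Icc [Nonempty n] (hC : Cᵀ * M * C = 1) (hD : Cᵀ * S * C = diagonal lam)
    {x : n → ℝ} (hx : x ≠ 0) :
    genRayleigh S M x ∈ Set.Icc (univ.inf' univ_nonempty lam) (univ.sup' univ_nonempty lam) := by
  have hz : (Cᵀ * M) *ᵥ x ≠ 0 := fun h => hx <| by
    simpa [mul_transpose_mul_eq_one hC] using congrArg (C *ᵥ ·) h
  have hpos : 0 < ∑ i, ((Cᵀ * M) *ᵥ x) i ^ 2 := by
    obtain ⟨i, hi⟩ := Function.ne_iff.mp hz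
    exact sum_pos' (fun i _ => sq_nonneg _) ⟨i, mem_univ i, pow_two_pos_of_ne_zero hi⟩
  rw [← one_mulVec x, ← mul_transpose_mul_eq_one hC, ← mulVec_mulVec, genRayleigh_mulVec hC hD]
  exact sum_mul_div_sum_mem_Icc lam _ (fun i => sq_nonneg _) hpos

lemma isLeast_genRayleigh [Nonempty n] (hC : Cᵀ * M * C = 1) (hD : Cᵀ * S * C = diagonal lam) :
    IsLeast (genRayleigh S M '' {x | x ≠ 0}) (univ.inf' univ_nonempty lam) := by
  obtain ⟨i, -, hi⟩ := exists_mem_eq_inf' univ_nonempty lam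
  refine ⟨⟨C *ᵥ Pi.single i 1, mulVec_ne_zero_of_transpose_mul_mul_eq_one hC (by simp), ?_⟩, ?_⟩
  · rw [genRayleigh_mulVec_single hC hD, hi]
  · rintro _ ⟨x, hx, rfl⟩
    exact (genRayleigh_mem_Icc hC hD hx).1

lemma isGreatest_genRayleigh [Nonempty n] (hC : Cᵀ * M * C = 1)
    (hD : Cᵀ * S * C = diagonal lam) :
    IsGreatest (genRayleigh S M '' {x | x ≠ 0}) (univ.sup' univ_nonempty lam) := by
  obtain ⟨i, -, hi⟩ := exists_mem_eq_sup' univ_nonempty lam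
  refine ⟨⟨C *ᵥ Pi.single i 1, mulVec_ne_zero_of_transpose_mul_mul_eq_one hC (by simp), ?_⟩, ?_⟩
  · rw [genRayleigh_mulVec_single hC hD, hi]
  · rintro _ ⟨x, hx, rfl⟩
    exact (genRayleigh_mem_Icc hC hD hx).2

end Matrix

lemma sqrt_dotProduct_mul_le {n : Type*} [Fintype n] {e v : n → ℝ} {K : ℝ}
    (he : ∀ i, |e i| ≤ K) : √((e * v) ⬝ᵥ (e * v)) ≤ K * √(v ⬝ᵥ v) := by
  rcases isEmpty_or_nonempty n with hn | ⟨⟨i₀⟩⟩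
  · simp [dotProduct]
  have hK : 0 ≤ K := (abs_nonneg _).trans (he i₀)
  calc √((e * v) ⬝ᵥ (e * v)) ≤ √(K ^ 2 * (v ⬝ᵥ v)) := by
        refine Real.sqrt_le_sqrt ?_
        simp only [dotProduct, mul_sum, Pi.mul_apply]
        refine sum_le_sum fun i _ => ?_
        have : e i ^ 2 ≤ K ^ 2 := sq_le_sq' (abs_le.1 (he i)).1 (abs_le.1 (he i)).2
        nlinarith [mul_self_nonneg (v i)]
    _ = K * √(v ⬝ᵥ v) := by rw [Real.sqrt_mul (sq_nonneg K), Real.sqrt_sq hK]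

lemma integral_mulVec {X m n : Type*} [MeasurableSpace X] {μ : Measure X} [Fintype m]
    [Fintype n] (A : Matrix m n ℝ) {F : X → n → ℝ} (hF : Integrable F μ) :
    ∫ x, A *ᵥ F x ∂μ = A *ᵥ ∫ x, F x ∂μ :=
  A.mulVecLin.toContinuousLinearMap.integral_comp_comm hF

lemma integrableOn_exp_neg_mul_inv_add {lam : ℝ} (hlam : 0 < lam) (s : ℝ) :
    IntegrableOn (fun t => exp (-t) * (lam + exp (-(t / s)))⁻¹) (Ioi 0) := by
  refine ((integrableOn_exp_neg_Ioi 0).const_mul lam⁻¹).mono' (by fun_prop)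
    (ae_of_all _ fun t => ?_)
  rw [Real.norm_eq_abs, abs_of_pos (by positivity), mul_comm]
  exact mul_le_mul_of_nonneg_right (inv_anti₀ hlam (by linarith [exp_pos (-(t / s))]))
    (exp_pos _).le

lemma abs_integral_sub_sum_eq_inv_mul_gQuad {lam : ℝ} (hlam : 0 < lam) (Q : ℕ)
    (y τ : Fin Q → ℝ) (s : ℝ) :
    |(∫ t in Ioi 0, exp (-t) * (lam + exp (-(t / s)))⁻¹) -
        ∑ j, τ j * (lam + exp (-(y j / s)))⁻¹| = lam⁻¹ * gQuad Q y τ lam⁻¹ (1 / s) := by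
  have key : ∀ c u : ℝ,
      c * (lam + exp (-(u / s)))⁻¹ = lam⁻¹ * (c / (1 + lam⁻¹ * exp (-(1 / s) * u))) := by
    intro c u
    rw [show -(1 / s) * u = -(u / s) by ring]
    field_simp
  simp_rw [key, integral_const_mul, ← mul_sum, ← mul_sub, abs_mul, abs_of_pos (inv_pos.2 hlam)]
  rfl

lemma gQuad_le {a : ℝ} (ha : 0 ≤ a) (Q : ℕ) (y τ : Fin Q → ℝ) (b : ℝ) :
    gQuad Q y τ a b ≤ 1 + ∑ j, |τ j| := by
  have hden : ∀ u, 1 ≤ 1 + a * exp (-b * u) := fun u => le_add_of_nonneg_right (by positivity)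
  have hI : |∫ t in Ioi 0, exp (-t) / (1 + a * exp (-b * t))| ≤ 1 := by
    have := norm_integral_le_of_norm_le (f := fun t => exp (-t) / (1 + a * exp (-b * t)))
      (integrableOn_exp_neg_Ioi 0) (ae_of_all _ fun t => by
        rw [Real.norm_eq_abs, abs_of_nonneg (by positivity)]
        exact div_le_self (exp_pos _).le (hden t))
    rwa [Real.norm_eq_abs, integral_exp_neg_Ioi_zero] at this
  have hQ : |∑ j, τ j / (1 + a * exp (-b * y j))| ≤ ∑ j, |τ j| := by
    refine (abs_sum_le_sum_abs _ _).trans (sum_le_sum fun j _ => ?_)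
    rw [abs_div, abs_of_pos (show 0 < 1 + a * exp (-b * y j) by linarith [hden (y j)])]
    exact div_le_self (abs_nonneg _) (hden _)
  exact (abs_sub _ _).trans (add_le_add hI hQ)

lemma inv_mul_gQuad_le_sSup {lmin lmax lam : ℝ} (hmin : 0 < lmin) (h1 : lmin ≤ lam)
    (h2 : lam ≤ lmax) (Q : ℕ) (y τ : Fin Q → ℝ) (b : ℝ) :
    lam⁻¹ * gQuad Q y τ lam⁻¹ b ≤
      1 / lmin * sSup ((fun a => gQuad Q y τ a b) '' Icc (1 / lmax) (1 / lmin)) := by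
  have hmax : 0 < lmax := hmin.trans_le (h1.trans h2)
  have hbdd : BddAbove ((fun a => gQuad Q y τ a b) '' Icc (1 / lmax) (1 / lmin)) := by
    refine ⟨1 + ∑ j, |τ j|, ?_⟩
    rintro _ ⟨a, ha, rfl⟩
    exact gQuad_le ((one_div_pos.2 hmax).le.trans ha.1) Q y τ b
  have hmem : lam⁻¹ ∈ Icc (1 / lmax) (1 / lmin) := by
    rw [one_div, one_div]
    exact ⟨inv_anti₀ (hmin.trans_le h1) h2, inv_anti₀ hmin h1⟩
  exact mul_le_mul hmem.2 (le_csSup hbdd ⟨_, hmem, rfl⟩) (abs_nonneg _) (by positivity)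

section

variable {N : ℕ} {S M C : Matrix (Fin N) (Fin N) ℝ} {lam : Fin N → ℝ}

lemma lamMinGen_eq_inf' [Nonempty (Fin N)] (hC : Cᵀ * M * C = 1)
    (hD : Cᵀ * S * C = diagonal lam) : lamMinGen S M = univ.inf' univ_nonempty lam :=
  (isLeast_genRayleigh hC hD).csInf_eq

lemma lamMaxGen_eq_sup' [Nonempty (Fin N)] (hC : Cᵀ * M * C = 1)
    (hD : Cᵀ * S * C = diagonal lam) : lamMaxGen S M = univ.sup' univ_nonempty lam :=
  (isGreatest_genRayleigh hC hD).csSup_eq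

lemma wMinus_eq (hC : Cᵀ * M * C = 1) (hD : Cᵀ * S * C = diagonal lam)
    (hlam : ∀ i, 0 < lam i) (f : Fin N → ℝ) (y : ℝ) :
    wMinus S M f y = C *ᵥ ((fun i => (lam i + exp (-y))⁻¹) * (Cᵀ *ᵥ f)) := by
  rw [wMinus, inv_add_smul_eq hC hD fun i => (add_pos (hlam i) (exp_pos _)).ne',
    ← mulVec_mulVec, ← mulVec_mulVec]
  congr 1
  ext i
  simp [mulVec_diagonal]

lemma integral_sub_sum_wMinus_eq (hC : Cᵀ * M * C = 1) (hD : Cᵀ * S * C = diagonal lam)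
    (hlam : ∀ i, 0 < lam i) (f : Fin N → ℝ) (s : ℝ) (Q : ℕ) (y τ : Fin Q → ℝ) :
    (∫ t in Ioi 0, exp (-t) • wMinus S M f (t / s)) - ∑ j, τ j • wMinus S M f (y j / s) =
      C *ᵥ ((fun i => (∫ t in Ioi 0, exp (-t) * (lam i + exp (-(t / s)))⁻¹) -
        ∑ j, τ j * (lam i + exp (-(y j / s)))⁻¹) * (Cᵀ *ᵥ f)) := by
  have hw : ∀ c u, c • wMinus S M f u =
      C *ᵥ ((fun i => c * (lam i + exp (-u))⁻¹) * (Cᵀ *ᵥ f)) := by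
    intro c u
    rw [wMinus_eq hC hD hlam, ← mulVec_smul]
    congr 1
    ext i
    simp [mul_assoc]
  have hF : ∀ i, Integrable
      (fun t => ((fun i => exp (-t) * (lam i + exp (-(t / s)))⁻¹) * (Cᵀ *ᵥ f)) i)
      (volume.restrict (Ioi 0)) :=
    fun i => (integrableOn_exp_neg_mul_inv_add (hlam i) s).mul_const _
  simp_rw [hw]
  rw [integral_mulVec C (Integrable.of_eval hF), ← mulVec_sum, ← mulVec_sub]
  congr 1
  ext i
  simp only [Pi.sub_apply, eval_integral hF, Finset.sum_apply, Pi.mul_apply]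
  rw [integral_mul_const, sub_mul, sum_mul]

end

theorem quad_error_minus_general {N : ℕ} (S M : Matrix (Fin N) (Fin N) ℝ)
    (hS : S.PosDef) (hM : M.PosDef) (f : Fin N → ℝ)
    (sm : ℝ)
    (Q : ℕ) (y τ : Fin Q → ℝ) :
    normWeighted M
        ((∫ t in Set.Ioi (0:ℝ), Real.exp (-t) • wMinus S M f (t / sm)) -
          ∑ j, τ j • wMinus S M f (y j / sm)) ≤
      normWeighted M⁻¹ f * (1 / lamMinGen S M) *
        sSup ((fun a => gQuad Q y τ a (1 / sm)) ''
          Set.Icc (1 / lamMaxGen S M) (1 / lamMinGen S M)) := by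
  obtain ⟨C, lam, hC, hD⟩ := hM.exists_transpose_mul_mul_eq_diagonal hS.isHermitian
  have hlam := hS.pos_of_transpose_mul_mul_eq_diagonal hC hD
  rw [normWeighted, normWeighted, integral_sub_sum_wMinus_eq hC hD hlam,
    mulVec_dotProduct_mulVec_mulVec, hC, one_mulVec, dotProduct_inv_mulVec hC, mul_assoc,
    mul_comm √(Cᵀ *ᵥ f ⬝ᵥ Cᵀ *ᵥ f)]
  refine sqrt_dotProduct_mul_le fun i => ?_
  have : Nonempty (Fin N) := ⟨i⟩
  rw [abs_integral_sub_sum_eq_inv_mul_gQuad (hlam i)]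
  refine inv_mul_gQuad_le_sSup ?_ ?_ ?_ Q y τ _
  · rw [lamMinGen_eq_inf' hC hD]
    exact (lt_inf'_iff _).2 fun i _ => hlam i
  · rw [lamMinGen_eq_inf' hC hD]
    exact inf'_le _ (mem_univ i)
  · rw [lamMaxGen_eq_sup' hC hD]
    exact le_sup' _ (mem_univ i)

/-- The '−' half of Proposition 4.1: the vector-valued quadrature error for `w₋` is
controlled by the scalar quadrature error function `g` over the spectral interval
`I₋ = [1/λ_max(S,M), 1/λ_min(S,M)]`. -/
theorem quad_error_minus {N : ℕ} (S M : Matrix (Fin N) (Fin N) ℝ)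
    (hS : S.PosDef) (hM : M.PosDef) (f : Fin N → ℝ)
    (sm : ℝ) (hsm : sm ∈ Set.Ioo (0:ℝ) 1)
    (Q : ℕ) (y τ : Fin Q → ℝ) (hy : ∀ j, 0 ≤ y j) (hτ : ∀ j, 0 ≤ τ j) :
    normWeighted M
        ((∫ t in Set.Ioi (0:ℝ), Real.exp (-t) • wMinus S M f (t / sm)) -
          ∑ j, τ j • wMinus S M f (y j / sm)) ≤
      normWeighted M⁻¹ f * (1 / lamMinGen S M) *
        sSup ((fun a => gQuad Q y τ a (1 / sm)) ''
          Set.Icc (1 / lamMaxGen S M) (1 / lamMinGen S M)) :=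
  quad_error_minus_general S M hS hM f sm Q y τ
end
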